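/- Let n ≥ 1 and α > 0. For every measurable f : ℂⁿ → ℂ with ‖f‖_{∞,α} := ess sup_{z∈ℂⁿ} |f(z)| e^{−(α/2)|z|²} < ∞, the integral (P_α f)(z) = ∫_{ℂⁿ} e^{α⟨z,w⟩} f(w) dμ_α(w) converges absolutely for every z ∈ ℂⁿ and satisfies |(P_α f)(z)| e^{−(α/2)|z|²} ≤ 2ⁿ ‖f‖_{∞,α} for all z ∈ ℂⁿ; in particular P_α is bounded on the space L_α^∞ = {f measurable : ‖f‖_{∞,α} < ∞} with norm at most 2ⁿ. -/

import Mathlib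

/-!
With `M = ‖f‖_{∞,α}`, the integrand is dominated a.e. by `M e^{α Re⟨z,w⟩ + (α/2)|w|²}`.
Against `μ_α` this majorant becomes `(α/π)ⁿ e^{α Re⟨z,w⟩ - (α/2)|w|²} dw`, a Gaussian integral
that factors over the `n` complex coordinates and equals `(α/π)ⁿ (2π/α)ⁿ e^{(α/2)|z|²}`,
i.e. exactly `2ⁿ e^{(α/2)|z|²}`.
-/

open MeasureTheory Complex Filter Metric

noncomputable section

set_option synthInstance.maxHeartbeats 1000000
set_option maxHeartbeats 1000000

/-- ℂⁿ with its Euclidean (Hermitian) norm. -/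
abbrev Cn (n : ℕ) := EuclideanSpace ℂ (Fin n)

instance (n : ℕ) : MeasurableSpace (Cn n) :=
  MeasurableSpace.comap (fun x : Cn n => WithLp.ofLp x) MeasurableSpace.pi
instance (n : ℕ) : MeasureSpace (Cn n) :=
  ⟨Measure.map (fun x : Fin n → ℂ => (WithLp.toLp 2 x : Cn n)) (Measure.pi fun _ => (volume : Measure ℂ))⟩

/-- The standard Hermitian inner product ⟨z,w⟩ on ℂⁿ, linear in the first argument and
antilinear in the second. -/
def herm {n : ℕ} (z w : Cn n) : ℂ := inner ℂ w z

/-- The Gaussian measure dμ_ν(z) = (ν/π)ⁿ e^{−ν|z|²} dz on ℂⁿ. -/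
def gaussMeasure (n : ℕ) (ν : ℝ) : Measure (Cn n) :=
  volume.withDensity fun z => ENNReal.ofReal ((ν / Real.pi) ^ n * Real.exp (-ν * ‖z‖ ^ 2))

/-- L_α^p = L^p(ℂⁿ, μ_{pα/2}). -/
abbrev Lpa (n : ℕ) (p α : ℝ) := Lp ℂ (ENNReal.ofReal p) (gaussMeasure n (p * α / 2))

/-- The norm of L_α^∞: ess sup of |f(z)| e^{−(α/2)|z|²}, valued in [0,∞]. -/
def LinfNorm (n : ℕ) (α : ℝ) (f : Cn n → ℂ) : ENNReal :=
  essSup (fun z => ENNReal.ofReal (‖f z‖ * Real.exp (-(α / 2) * ‖z‖ ^ 2)))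
    (volume : Measure (Cn n))

open scoped RealInnerProductSpace

section GaussianIntegral

variable {V : Type*} [NormedAddCommGroup V] [InnerProductSpace ℝ V]

lemma cexp_neg_mul_sq_norm_add_eq_ofReal_exp (b : ℝ) (a v : V) :
    Complex.exp (-(b : ℂ) * ‖v‖ ^ 2 + (2 * b : ℂ) * ⟪a, v⟫)
      = (Real.exp (2 * b * ⟪a, v⟫ - b * ‖v‖ ^ 2) : ℂ) := by
  push_cast; ring_nf

variable [FiniteDimensional ℝ V] [MeasurableSpace V] [BorelSpace V]

theorem integrable_exp_two_mul_inner_sub_mul_sq {b : ℝ} (hb : 0 < b) (a : V) :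
    Integrable fun v : V => Real.exp (2 * b * ⟪a, v⟫ - b * ‖v‖ ^ 2) := by
  have h := (GaussianFourier.integrable_cexp_neg_mul_sq_norm_add
    (b := (b : ℂ)) (by simpa using hb) (2 * b) a).norm
  simp_rw [cexp_neg_mul_sq_norm_add_eq_ofReal_exp, Complex.norm_real, Real.norm_eq_abs,
    Real.abs_exp] at h
  exact h

theorem integral_exp_two_mul_inner_sub_mul_sq {b : ℝ} (hb : 0 < b) (a : V) :
    ∫ v : V, Real.exp (2 * b * ⟪a, v⟫ - b * ‖v‖ ^ 2)
      = (Real.pi / b) ^ (Module.finrank ℝ V / 2 : ℝ) * Real.exp (b * ‖a‖ ^ 2) := by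
  have h := GaussianFourier.integral_cexp_neg_mul_sq_norm_add
    (b := (b : ℂ)) (by simpa using hb) (2 * b) a
  simp_rw [cexp_neg_mul_sq_norm_add_eq_ofReal_exp] at h
  rw [integral_complex_ofReal] at h
  apply Complex.ofReal_injective
  rw [h, show (2 * b : ℂ) ^ 2 * ‖a‖ ^ 2 / (4 * b) = ((b * ‖a‖ ^ 2 : ℝ) : ℂ) by
    push_cast; field_simp; ring]
  push_cast
  rw [Complex.ofReal_cpow (by positivity)]
  push_cast
  rfl

end GaussianIntegral

namespace Cn

variable {n : ℕ}

lemma re_inner_eq_sum (z w : Cn n) : (inner ℂ z w).re = ∑ i, ⟪z i, w i⟫ := by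
  simp only [PiLp.inner_apply, Complex.re_sum]
  rfl

theorem integrable_prod (F : Fin n → ℂ → ℝ) (hF : ∀ i, Integrable (F i)) :
    Integrable fun w : Cn n => ∏ i, F i (w i) :=
  (MeasurableEquiv.toLp 2 (Fin n → ℂ)).measurableEmbedding.integrable_map_iff.mpr
    (Integrable.fintype_prod hF)

theorem integral_prod (F : Fin n → ℂ → ℝ) :
    ∫ w : Cn n, ∏ i, F i (w i) = ∏ i, ∫ v, F i v := by
  rw [← integral_fintype_prod_eq_prod F]
  exact (MeasurableEquiv.toLp 2 (Fin n → ℂ)).measurableEmbedding.integral_map _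

lemma exp_two_mul_inner_sub_mul_sq_eq_prod (b : ℝ) (z w : Cn n) :
    Real.exp (2 * b * (inner ℂ z w).re - b * ‖w‖ ^ 2)
      = ∏ i, Real.exp (2 * b * ⟪z i, w i⟫ - b * ‖w i‖ ^ 2) := by
  rw [← Real.exp_sum, re_inner_eq_sum, EuclideanSpace.norm_sq_eq, Finset.sum_sub_distrib,
    ← Finset.mul_sum, ← Finset.mul_sum]

theorem integrable_exp_two_mul_re_inner_sub_mul_sq {b : ℝ} (hb : 0 < b) (z : Cn n) :
    Integrable fun w : Cn n => Real.exp (2 * b * (inner ℂ z w).re - b * ‖w‖ ^ 2) := by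
  simp_rw [exp_two_mul_inner_sub_mul_sq_eq_prod]
  exact integrable_prod _ fun i => integrable_exp_two_mul_inner_sub_mul_sq hb (z i)

theorem integral_exp_two_mul_re_inner_sub_mul_sq {b : ℝ} (hb : 0 < b) (z : Cn n) :
    ∫ w : Cn n, Real.exp (2 * b * (inner ℂ z w).re - b * ‖w‖ ^ 2)
      = (Real.pi / b) ^ n * Real.exp (b * ‖z‖ ^ 2) := by
  simp_rw [exp_two_mul_inner_sub_mul_sq_eq_prod]
  rw [integral_prod fun i v => Real.exp (2 * b * ⟪z i, v⟫ - b * ‖v‖ ^ 2)]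
  simp_rw [integral_exp_two_mul_inner_sub_mul_sq hb, Complex.finrank_real_complex]
  rw [Finset.prod_mul_distrib, EuclideanSpace.norm_sq_eq, Finset.mul_sum, Real.exp_sum]
  norm_num [div_pow]

end Cn

section GaussMeasure

variable {n : ℕ} {E : Type*} [NormedAddCommGroup E] [NormedSpace ℝ E]

lemma gaussMeasure_absolutelyContinuous (ν : ℝ) : gaussMeasure n ν ≪ volume :=
  withDensity_absolutelyContinuous _ _

lemma measurable_gaussDensity (ν : ℝ) :
    Measurable fun z : Cn n => ENNReal.ofReal ((ν / Real.pi) ^ n * Real.exp (-ν * ‖z‖ ^ 2)) :=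
  ENNReal.measurable_ofReal.comp (by fun_prop)

lemma toReal_gaussDensity {ν : ℝ} (hν : 0 ≤ ν) (z : Cn n) :
    (ENNReal.ofReal ((ν / Real.pi) ^ n * Real.exp (-ν * ‖z‖ ^ 2))).toReal
      = (ν / Real.pi) ^ n * Real.exp (-ν * ‖z‖ ^ 2) :=
  ENNReal.toReal_ofReal (by positivity)

theorem integrable_gaussMeasure_iff {ν : ℝ} (hν : 0 ≤ ν) {g : Cn n → E} :
    Integrable g (gaussMeasure n ν)
      ↔ Integrable (fun z => ((ν / Real.pi) ^ n * Real.exp (-ν * ‖z‖ ^ 2)) • g z) := by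
  simp_rw [gaussMeasure, integrable_withDensity_iff_integrable_smul' (measurable_gaussDensity ν)
    (ae_of_all _ fun _ => ENNReal.ofReal_lt_top), toReal_gaussDensity hν]

theorem integral_gaussMeasure {ν : ℝ} (hν : 0 ≤ ν) (g : Cn n → E) :
    ∫ z, g z ∂gaussMeasure n ν
      = ∫ z, ((ν / Real.pi) ^ n * Real.exp (-ν * ‖z‖ ^ 2)) • g z := by
  simp_rw [gaussMeasure, integral_withDensity_eq_integral_toReal_smul (measurable_gaussDensity ν)
    (ae_of_all _ fun _ => ENNReal.ofReal_lt_top), toReal_gaussDensity hν]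

end GaussMeasure

section BergmanProjection

variable {n : ℕ} {α : ℝ}

lemma norm_exp_mul_herm (α : ℝ) (z w : Cn n) :
    ‖Complex.exp ((α : ℂ) * herm z w)‖ = Real.exp (α * (inner ℂ z w).re) := by
  rw [Complex.norm_exp, Complex.re_ofReal_mul, herm, ← inner_conj_symm, Complex.conj_re]

lemma gaussDensity_mul_exp_eq (α : ℝ) (z w : Cn n) :
    (α / Real.pi) ^ n * Real.exp (-α * ‖w‖ ^ 2)
        * Real.exp (α * (inner ℂ z w).re + α / 2 * ‖w‖ ^ 2)
      = (α / Real.pi) ^ n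
        * Real.exp (2 * (α / 2) * (inner ℂ z w).re - α / 2 * ‖w‖ ^ 2) := by
  rw [mul_assoc, ← Real.exp_add]
  ring_nf

theorem integrable_exp_re_inner_add_sq (hα : 0 < α) (z : Cn n) :
    Integrable (fun w => Real.exp (α * (inner ℂ z w).re + α / 2 * ‖w‖ ^ 2))
      (gaussMeasure n α) := by
  simp_rw [integrable_gaussMeasure_iff hα.le, smul_eq_mul, gaussDensity_mul_exp_eq]
  exact (Cn.integrable_exp_two_mul_re_inner_sub_mul_sq (half_pos hα) z).const_mul _

theorem integral_exp_re_inner_add_sq (hα : 0 < α) (z : Cn n) :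
    ∫ w, Real.exp (α * (inner ℂ z w).re + α / 2 * ‖w‖ ^ 2) ∂gaussMeasure n α
      = 2 ^ n * Real.exp (α / 2 * ‖z‖ ^ 2) := by
  simp_rw [integral_gaussMeasure hα.le, smul_eq_mul, gaussDensity_mul_exp_eq, integral_const_mul,
    Cn.integral_exp_two_mul_re_inner_sub_mul_sq (half_pos hα), ← mul_assoc, ← mul_pow]
  congr 2
  field_simp [Real.pi_pos.ne']

lemma ae_norm_le_LinfNorm_mul_exp {f : Cn n → ℂ} (hfin : LinfNorm n α f ≠ ⊤) :
    ∀ᵐ w, ‖f w‖ ≤ (LinfNorm n α f).toReal * Real.exp (α / 2 * ‖w‖ ^ 2) := by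
  filter_upwards [ae_le_essSup (f := fun z => ENNReal.ofReal
    (‖f z‖ * Real.exp (-(α / 2) * ‖z‖ ^ 2)))] with w hw
  rw [← div_le_iff₀ (Real.exp_pos _), div_eq_mul_inv, ← Real.exp_neg, ← neg_mul,
    ← ENNReal.ofReal_le_iff_le_toReal hfin]
  exact hw

lemma ae_norm_exp_mul_herm_mul_le {f : Cn n → ℂ} (hfin : LinfNorm n α f ≠ ⊤) (z : Cn n) :
    ∀ᵐ w ∂gaussMeasure n α, ‖Complex.exp ((α : ℂ) * herm z w) * f w‖
      ≤ (LinfNorm n α f).toReal * Real.exp (α * (inner ℂ z w).re + α / 2 * ‖w‖ ^ 2) := by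
  filter_upwards [(gaussMeasure_absolutelyContinuous α).ae_le
    (ae_norm_le_LinfNorm_mul_exp hfin)] with w hw
  rw [norm_mul, norm_exp_mul_herm, Real.exp_add, mul_left_comm]
  gcongr

theorem integrable_exp_mul_herm_mul (hα : 0 < α) {f : Cn n → ℂ} (hf : Measurable f)
    (hfin : LinfNorm n α f ≠ ⊤) (z : Cn n) :
    Integrable (fun w => Complex.exp ((α : ℂ) * herm z w) * f w) (gaussMeasure n α) :=
  ((integrable_exp_re_inner_add_sq hα z).const_mul _).mono'
    ((by unfold herm; fun_prop : Continuous fun w => Complex.exp ((α : ℂ) * herm z w))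
      |>.measurable.mul hf).aestronglyMeasurable (ae_norm_exp_mul_herm_mul_le hfin z)

theorem norm_integral_exp_mul_herm_mul_le (hα : 0 < α) {f : Cn n → ℂ}
    (hfin : LinfNorm n α f ≠ ⊤) (z : Cn n) :
    ‖∫ w, Complex.exp ((α : ℂ) * herm z w) * f w ∂gaussMeasure n α‖
      ≤ 2 ^ n * (LinfNorm n α f).toReal * Real.exp (α / 2 * ‖z‖ ^ 2) := calc
  _ ≤ ∫ w, (LinfNorm n α f).toReal * Real.exp (α * (inner ℂ z w).re + α / 2 * ‖w‖ ^ 2)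
        ∂gaussMeasure n α :=
    norm_integral_le_of_norm_le ((integrable_exp_re_inner_add_sq hα z).const_mul _)
      (ae_norm_exp_mul_herm_mul_le hfin z)
  _ = 2 ^ n * (LinfNorm n α f).toReal * Real.exp (α / 2 * ‖z‖ ^ 2) := by
    rw [integral_const_mul, integral_exp_re_inner_add_sq hα]; ring

end BergmanProjection

theorem statement8_general (n : ℕ) (α : ℝ) (hα : 0 < α)
    (f : Cn n → ℂ) (hf : Measurable f) (hfin : LinfNorm n α f ≠ ⊤) :
    (∀ z : Cn n,
      Integrable (fun w => Complex.exp ((α : ℂ) * herm z w) * f w) (gaussMeasure n α)) ∧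
    (∀ z : Cn n,
      ENNReal.ofReal
          (‖∫ w, Complex.exp ((α : ℂ) * herm z w) * f w ∂gaussMeasure n α‖
            * Real.exp (-(α / 2) * ‖z‖ ^ 2))
        ≤ 2 ^ n * LinfNorm n α f) ∧
    LinfNorm n α
        (fun z => ∫ w, Complex.exp ((α : ℂ) * herm z w) * f w ∂gaussMeasure n α)
      ≤ 2 ^ n * LinfNorm n α f := by
  have hweighted : ∀ z : Cn n,
      ENNReal.ofReal (‖∫ w, Complex.exp ((α : ℂ) * herm z w) * f w ∂gaussMeasure n α‖
        * Real.exp (-(α / 2) * ‖z‖ ^ 2)) ≤ 2 ^ n * LinfNorm n α f := fun z => calc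
    _ ≤ ENNReal.ofReal (2 ^ n * (LinfNorm n α f).toReal) := ENNReal.ofReal_le_ofReal <| by
        rw [neg_mul, Real.exp_neg, ← div_eq_mul_inv, div_le_iff₀ (Real.exp_pos _)]
        exact norm_integral_exp_mul_herm_mul_le hα hfin z
    _ = 2 ^ n * LinfNorm n α f := by
        rw [ENNReal.ofReal_mul (by positivity), ENNReal.ofReal_toReal hfin,
          ENNReal.ofReal_pow zero_le_two, ENNReal.ofReal_ofNat]
  exact ⟨integrable_exp_mul_herm_mul hα hf hfin, hweighted,
    essSup_le_of_ae_le _ (ae_of_all _ hweighted)⟩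

/-- For every f with ‖f‖_{∞,α} < ∞ the integral defining (P_α f)(z)
converges absolutely for every z and |(P_α f)(z)| e^{−(α/2)|z|²} ≤ 2ⁿ ‖f‖_{∞,α}; in
particular P_α is bounded on L_α^∞ with norm at most 2ⁿ. -/
theorem statement8 (n : ℕ) (hn : 1 ≤ n) (α : ℝ) (hα : 0 < α)
    (f : Cn n → ℂ) (hf : Measurable f) (hfin : LinfNorm n α f ≠ ⊤) :
    (∀ z : Cn n,
      Integrable (fun w => Complex.exp ((α : ℂ) * herm z w) * f w) (gaussMeasure n α)) ∧
    (∀ z : Cn n,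
      ENNReal.ofReal
          (‖∫ w, Complex.exp ((α : ℂ) * herm z w) * f w ∂gaussMeasure n α‖
            * Real.exp (-(α / 2) * ‖z‖ ^ 2))
        ≤ 2 ^ n * LinfNorm n α f) ∧
    LinfNorm n α
        (fun z => ∫ w, Complex.exp ((α : ℂ) * herm z w) * f w ∂gaussMeasure n α)
      ≤ 2 ^ n * LinfNorm n α f :=
  statement8_general n α hα f hf hfin
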